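/- Any infinitesimally conical vector field action of the quaternions on a hyperkaehler manifold necessarily has weight k = 2. Precisely: if η, θ1, θ2, θ3 are vector fields with θa = Ja η, L_η ωa = k·ωa, and L_{θa} ωb = -2ε_{abc} ωc for distinct a,b,c, and if the hyperkaehler compatibility ωc(u,v) = ωa(Jb u, v)ε_{abc} holds, then k = 2. -/

import Mathlib

/-!
By the compatibility `ω₂(u, v) = -ω₁(J₀ u, v)`, the contraction `θ₀ ⌟ ω₁` equals `-(η ⌟ ω₂)`.
Cartan's formula then gives `L_{θ₀} ω₁ = -L_η ω₂`, that is `-2 ω₂ = -k ω₂`, and `ω₂ ≠ 0` forces `k = 2`.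
-/

/-- The signature `ε_{abc}` for indices in `Fin 3` (as a real number). -/
noncomputable def eps (a b c : Fin 3) : ℝ :=
  if a = b ∨ b = c ∨ a = c then 0 else if b = a + 1 then 1 else -1

theorem eps_zero_one_two : eps 0 1 2 = 1 := by
  norm_num [eps, Fin.ext_iff]

theorem eps_one_zero_two : eps 1 0 2 = -1 := by
  norm_num [eps, Fin.ext_iff]
  decide

theorem contract_comp_J_eq_neg {X V : Type*} [AddCommGroup V] [Module ℝ V]
    {J : Fin 3 → X → V →ₗ[ℝ] V} {ω : Fin 3 → X → V →ₗ[ℝ] V →ₗ[ℝ] ℝ}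
    (hcompat : ∀ a b c, eps a b c ≠ 0 → ∀ x u v,
      ω c x u v = eps a b c * ω a x (J b x u) v)
    {a b c : Fin 3} (habc : eps b a c = -1) (η : X → V) :
    (fun x => ω b x (J a x (η x))) = -fun x => ω c x (η x) := by
  funext x
  ext v
  have h := hcompat b a c (by simp [habc]) x (η x) v
  rw [habc] at h
  simp only [Pi.neg_apply, LinearMap.neg_apply]
  linarith

theorem stmt3_general {X V : Type*} [AddCommGroup V] [Module ℝ V]
    (J : Fin 3 → X → V →ₗ[ℝ] V)
    (ω : Fin 3 → X → V →ₗ[ℝ] V →ₗ[ℝ] ℝ)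
    (hcompat : ∀ a b c, eps a b c ≠ 0 → ∀ x u v,
      ω c x u v = eps a b c * ω a x (J b x u) v)
    (η : X → V) (θ : Fin 3 → X → V)
    (hθ : ∀ a x, θ a x = J a x (η x))
    (d : (X → V →ₗ[ℝ] ℝ) →ₗ[ℝ] (X → V →ₗ[ℝ] V →ₗ[ℝ] ℝ))
    (L : (X → V) → (X → V →ₗ[ℝ] V →ₗ[ℝ] ℝ) → (X → V →ₗ[ℝ] V →ₗ[ℝ] ℝ))
    (cartan : ∀ (ξ : X → V) (a : Fin 3), L ξ (ω a) = d (fun x => ω a x (ξ x)))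
    (k : ℝ)
    (hLη : ∀ a, L η (ω a) = k • ω a)
    (hLθ : ∀ a b c, eps a b c ≠ 0 → L (θ a) (ω b) = (-2 * eps a b c) • ω c)
    (hnz : ∀ a, ω a ≠ 0) :
    k = 2 := by
  have hθ₀ : θ 0 = fun x => J 0 x (η x) := funext (hθ 0)
  have hLθ₀ : L (θ 0) (ω 1) = (-k) • ω 2 := by
    rw [cartan, hθ₀, contract_comp_J_eq_neg hcompat eps_one_zero_two, map_neg, ← cartan, hLη,
      ← neg_smul k (ω 2)]
  have h : (-k) • ω 2 = (-2 : ℝ) • ω 2 := by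
    rw [← hLθ₀, hLθ 0 1 2 (by simp [eps_zero_one_two]), eps_zero_one_two, mul_one]
  have := smul_left_injective ℝ (M := X → V →ₗ[ℝ] V →ₗ[ℝ] ℝ) (hnz 2) h
  linarith

/-- Any infinitesimally conical vector field action of `ℍ` on a
hyperkaehler manifold necessarily has weight `k = 2`.  Here the manifold is modelled
by a family, indexed by points `x : X`, of tangent data: a metric `g`, almost complex
structures `J a`, and Kaehler 2-forms `ω a` with `ω a (u,v) = g (Ja u, v)` and the
hyperkaehler compatibility `ω c (u,v) = ε_{abc} ω a (Jb u, v)`.  The vector fields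
satisfy `θ a = J a η`, `L_η ω a = k • ω a` and `L_{θa} ω b = -2 ε_{abc} • ω c`, where
the Lie derivative of the closed forms `ω a` is given by Cartan's formula
`L_ξ ω a = d (ξ ⌟ ω a)`. -/
theorem stmt3 {X V : Type*} [AddCommGroup V] [Module ℝ V]
    (g : X → V →ₗ[ℝ] V →ₗ[ℝ] ℝ)
    (J : Fin 3 → X → V →ₗ[ℝ] V)
    (ω : Fin 3 → X → V →ₗ[ℝ] V →ₗ[ℝ] ℝ)
    (hg : ∀ a x u v, ω a x u v = g x (J a x u) v)
    (hcompat : ∀ a b c, eps a b c ≠ 0 → ∀ x u v,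
      ω c x u v = eps a b c * ω a x (J b x u) v)
    (η : X → V) (θ : Fin 3 → X → V)
    (hθ : ∀ a x, θ a x = J a x (η x))
    (d : (X → V →ₗ[ℝ] ℝ) →ₗ[ℝ] (X → V →ₗ[ℝ] V →ₗ[ℝ] ℝ))
    (L : (X → V) → (X → V →ₗ[ℝ] V →ₗ[ℝ] ℝ) → (X → V →ₗ[ℝ] V →ₗ[ℝ] ℝ))
    (cartan : ∀ (ξ : X → V) (a : Fin 3), L ξ (ω a) = d (fun x => ω a x (ξ x)))
    (k : ℝ)
    (hLη : ∀ a, L η (ω a) = k • ω a)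
    (hLθ : ∀ a b c, eps a b c ≠ 0 → L (θ a) (ω b) = (-2 * eps a b c) • ω c)
    (hnz : ∀ a, ω a ≠ 0) :
    k = 2 :=
  stmt3_general J ω hcompat η θ hθ d L cartan k hLη hLθ hnz
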